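/- arXiv:math/0504003 — 2 statements merged into one kernel-verified Lean document; each statement's English description precedes it below -/
import Mathlib

section
/- Let p be a prime, x a nonzero element of ℤ(p^∞), {n_k} an increasing sequence of positive integers, and a_k = −x + e_{n_k} where e_n = 1/p^n in ℤ(p^∞) ⊆ ℚ/ℤ. Then {a_k} is a T-sequence in ℤ(p^∞) if and only if n_{k+1} − n_k → ∞. -/
open Filter Topology

noncomputable section

/-- The Prüfer `p`-group, as the subgroup of `ℚ/ℤ` of elements of `p`-power order. -/
def Prufer (p : ℕ) : AddSubgroup (AddCircle (1 : ℚ)) where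
  carrier := {x | ∃ n : ℕ, p ^ n • x = 0}
  zero_mem' := ⟨0, smul_zero _⟩
  add_mem' := by
    rintro a b ⟨m, hm⟩ ⟨n, hn⟩
    refine ⟨m + n, ?_⟩
    have ha : p ^ (m + n) • a = 0 := by
      rw [pow_add, mul_comm, mul_smul, hm, smul_zero]
    have hb : p ^ (m + n) • b = 0 := by
      rw [pow_add, mul_smul, hn, smul_zero]
    rw [smul_add, ha, hb, add_zero]
  neg_mem' := by
    rintro a ⟨n, hn⟩
    exact ⟨n, by rw [smul_neg, hn, neg_zero]⟩

/-- The element `e_n = 1/p^n` of the Prüfer `p`-group. -/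
def eP (p n : ℕ) : Prufer p :=
  ⟨((((p : ℚ) ^ n)⁻¹ : ℚ) : AddCircle (1 : ℚ)), n, by
    rcases eq_or_ne ((p : ℚ) ^ n) 0 with h | h
    · simp [h]
    · have key : ((p ^ n : ℕ) • ((((p : ℚ) ^ n)⁻¹ : ℚ)) : ℚ) = (1 : ℚ) := by
        rw [nsmul_eq_mul]
        push_cast
        field_simp
      calc p ^ n • ((((p : ℚ) ^ n)⁻¹ : ℚ) : AddCircle (1 : ℚ))
          = (((p ^ n : ℕ) • (((p : ℚ) ^ n)⁻¹ : ℚ) : ℚ) : AddCircle (1 : ℚ)) := by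
            norm_cast
        _ = ((1 : ℚ) : AddCircle (1 : ℚ)) := by rw [key]
        _ = 0 := AddCircle.coe_period 1⟩

/-- `{a_k}` is a T-sequence: it converges to `0` in some Hausdorff group topology. -/
def IsTSeq {A : Type*} [AddCommGroup A] (a : ℕ → A) : Prop :=
  ∃ τ : TopologicalSpace A, @IsTopologicalAddGroup A τ _ ∧ @T2Space A τ ∧
    Filter.Tendsto a Filter.atTop (@nhds A τ 0)

/-- The set `A(l,m)` of sums `m₁ a_{k₁} + ⋯ + m_h a_{k_h}` with distinct indices `kᵢ ≥ m`,
nonzero integer coefficients, and `Σ|mᵢ| ≤ l`. -/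
def TSet {A : Type*} [AddCommGroup A] (a : ℕ → A) (l m : ℕ) : Set A :=
  {x | ∃ (s : Finset ℕ) (c : ℕ → ℤ), (∀ k ∈ s, m ≤ k) ∧ (∀ k ∈ s, c k ≠ 0) ∧
    (∑ k ∈ s, (c k).natAbs) ≤ l ∧ x = ∑ k ∈ s, c k • a k}

/-- `σ` is a finitely supported representation `y = Σ_{n ≥ 1} σ_n e_n`. -/
def IsRep (p : ℕ) (y : Prufer p) (σ : ℕ →₀ ℤ) : Prop :=
  σ 0 = 0 ∧ y = ∑ n ∈ σ.support, σ n • eP p n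

/-- `σ` is the canonical form of `y`: a representation with `|σ_n| ≤ (p-1)/2`. -/
def IsCanonical (p : ℕ) (y : Prufer p) (σ : ℕ →₀ ℤ) : Prop :=
  IsRep p y σ ∧ ∀ n, 2 * (σ n).natAbs ≤ p - 1

/-!
If a gap `g` occurs infinitely often, then `e_{n k} = p ^ g • e_{n (k+1)}` gives
`a k - a (k+1) = (p ^ g - 1) • (x + a (k+1))` infinitely often; in a Hausdorff group topology in
which `a k → 0` this forces `(p ^ g - 1) • x = 0`, impossible for `x ≠ 0` of `p`-power order.

Conversely write `x = b • e_N` with `b < p ^ N`. Multiplication by a `p`-adic unit `u` is an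
injective endomorphism of `ℤ(p^∞)`, so pulling back the topology of `ℚ/ℤ` along it gives a
Hausdorff group topology. Discarding finitely many terms so that all gaps are at least `N` and
taking `u = 1 + ∑ⱼ b p ^ (n j - N)`, the digits of `u` just below `n k` are those of `b`, so
`u • a k` is represented by a rational in `[0, p ^ (n (k-1) - n k)]`, which tends to `0`.
-/

theorem Nat.exists_frequently_eq_of_not_tendsto {f : ℕ → ℕ} (h : ¬Tendsto f atTop atTop) :
    ∃ g, ∃ᶠ k in atTop, f k = g := by
  by_contra hf
  refine h (Nat.cofinite_eq_atTop ▸ Tendsto.cofinite_of_finite_preimage_singleton fun g => ?_)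
  exact Set.not_infinite.1 (Nat.frequently_atTop_iff_infinite.not.1 (not_exists.1 hf g))

theorem Nat.add_mul_pow_sub_le {p b c N m : ℕ} (hc : c ≤ p ^ (m - N)) (hb : b < p ^ N)
    (hNm : N ≤ m) : c + b * p ^ (m - N) ≤ p ^ m :=
  calc c + b * p ^ (m - N) ≤ (b + 1) * p ^ (m - N) := by rw [add_one_mul, add_comm]; gcongr
    _ ≤ p ^ N * p ^ (m - N) := Nat.mul_le_mul_right _ hb
    _ = p ^ m := by rw [← pow_add, Nat.add_sub_cancel' hNm]

section IsTSeq

variable {A : Type*} [AddCommGroup A]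

theorem IsTSeq.of_add_nat {a : ℕ → A} (K : ℕ) (h : IsTSeq fun k => a (k + K)) : IsTSeq a :=
  let ⟨τ, hgroup, ht2, hlim⟩ := h
  ⟨τ, hgroup, ht2, (tendsto_add_atTop_iff_nat K).1 hlim⟩

theorem isTSeq_of_injective {G : Type*} [AddCommGroup G] [TopologicalSpace G]
    [IsTopologicalAddGroup G] [T2Space G] {f : A →+ G} (hf : Function.Injective f) {a : ℕ → A}
    (hlim : Tendsto (f ∘ a) atTop (𝓝 0)) : IsTSeq a := by
  let τ : TopologicalSpace A := TopologicalSpace.induced f inferInstance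
  refine ⟨τ, topologicalAddGroup_induced f, (Topology.IsEmbedding.mk ⟨rfl⟩ hf).t2Space, ?_⟩
  rwa [nhds_induced, map_zero, tendsto_comap_iff]

theorem IsTSeq.nsmul_eq_zero {a e : ℕ → A} {x : A} (ha : IsTSeq a) (hae : ∀ k, a k = -x + e k)
    {c : ℕ} (he : ∃ᶠ k in atTop, e k = (c + 1) • e (k + 1)) : c • x = 0 := by
  obtain ⟨τ, hgroup, ht2, hlim⟩ := ha
  have hsucc := hlim.comp (tendsto_add_atTop_nat 1)
  have hdiff : Tendsto (fun k => a k - a (k + 1)) atTop (𝓝 0) := by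
    simpa using hlim.sub hsucc
  have hmul : Tendsto (fun k => c • (x + a (k + 1))) atTop (𝓝 (c • x)) := by
    simpa using (tendsto_const_nhds.add hsucc).nsmul c
  refine (tendsto_nhds_unique_of_frequently_eq hdiff hmul (he.mono fun k hk => ?_)).symm
  rw [hae, hae, hk, add_nsmul, one_nsmul, add_neg_cancel_left]
  abel

end IsTSeq

namespace Prufer

variable {p : ℕ}

theorem exists_pow_nsmul_eq_zero (y : Prufer p) : ∃ m, p ^ m • y = 0 :=
  let ⟨m, hm⟩ := y.2
  ⟨m, Subtype.ext hm⟩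

theorem eq_zero_of_nsmul_eq_zero {y : Prufer p} {c : ℕ} (hc : c.Coprime p) (h : c • y = 0) :
    y = 0 := by
  obtain ⟨m, hm⟩ := exists_pow_nsmul_eq_zero y
  rw [← AddMonoid.addOrderOf_eq_one_iff]
  exact Nat.eq_one_of_dvd_coprimes (hc.pow_right m) (addOrderOf_dvd_of_nsmul_eq_zero h)
    (addOrderOf_dvd_of_nsmul_eq_zero hm)

theorem coe_nsmul_eP (c n : ℕ) :
    ((c • eP p n : Prufer p) : AddCircle (1 : ℚ)) =
      ((c / p ^ n : ℚ) : AddCircle (1 : ℚ)) := by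
  rw [AddSubgroup.coe_nsmul, eP, ← AddCircle.coe_nsmul, nsmul_eq_mul, div_eq_mul_inv]

theorem nsmul_eP_add (hp : p ≠ 0) (m g : ℕ) : p ^ g • eP p (m + g) = eP p m := by
  apply Subtype.ext
  rw [coe_nsmul_eP, eP]
  congr 1
  push_cast
  field_simp
  ring

theorem eP_zero : eP p 0 = 0 := by
  apply Subtype.ext
  simp [eP]

theorem pow_nsmul_eP_self (hp : p ≠ 0) (n : ℕ) : p ^ n • eP p n = 0 := by
  simpa [eP_zero] using nsmul_eP_add hp 0 n

theorem exists_eq_nsmul_eP (hp : p.Prime) (y : Prufer p) :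
    ∃ N b, b < p ^ N ∧ y = b • eP p N := by
  obtain ⟨m, hm⟩ := y.2
  have hfin : IsOfFinAddOrder (y : AddCircle (1 : ℚ)) :=
    isOfFinAddOrder_iff_nsmul_eq_zero.2 ⟨p ^ m, pow_pos hp.pos m, hm⟩
  obtain ⟨b, -, hb, hy⟩ := AddCircle.exists_gcd_eq_one_of_isOfFinAddOrder hfin
  obtain ⟨N, -, hN⟩ := (Nat.dvd_prime_pow hp).1 (addOrderOf_dvd_of_nsmul_eq_zero hm)
  refine ⟨N, b, hN ▸ hb, Subtype.ext ?_⟩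
  rw [coe_nsmul_eP, ← hy, hN, mul_one]
  push_cast
  rfl

theorem eq_zero_of_isTSeq_of_frequently_gap (hp : 0 < p) {x : Prufer p} {n : ℕ → ℕ}
    {a : ℕ → Prufer p} (hT : IsTSeq a) (ha : ∀ k, a k = -x + eP p (n k)) {g : ℕ}
    (hg0 : 0 < g) (hg : ∃ᶠ k in atTop, n (k + 1) = n k + g) : x = 0 := by
  have hpg : 1 ≤ p ^ g := Nat.one_le_pow _ _ hp
  have hcop : (p ^ g - 1).Coprime p := by
    have h := Nat.coprime_self_add_right.2 (Nat.coprime_one_right (p ^ g - 1))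
    rw [Nat.sub_add_cancel hpg] at h
    exact h.coprime_dvd_right (dvd_pow_self p hg0.ne')
  refine eq_zero_of_nsmul_eq_zero hcop (hT.nsmul_eq_zero ha (hg.mono fun k hk => ?_))
  rw [Nat.sub_add_cancel hpg, hk, nsmul_eP_add hp.ne']

section PadicMul

variable {U : ℕ → ℕ} (hU : ∀ ⦃m m'⦄, m ≤ m' → U m' ≡ U m [MOD p ^ m])
include hU

theorem nsmul_eq_nsmul_of_compatible {y : Prufer p} {m m' : ℕ} (hm : p ^ m • y = 0)
    (hm' : p ^ m' • y = 0) : U m • y = U m' • y := by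
  wlog h : m ≤ m' generalizing m m'
  · exact (this hm' hm (le_of_not_ge h)).symm
  exact nsmul_eq_nsmul_of_modEq (hU h).symm hm

/-- Multiplication by the `p`-adic integer whose residue modulo `p ^ m` is `U m`. -/
def padicMul : Prufer p →+ Prufer p where
  toFun y := U (exists_pow_nsmul_eq_zero y).choose • y
  map_zero' := nsmul_zero _
  map_add' y z := by
    obtain ⟨my, hy⟩ := exists_pow_nsmul_eq_zero y
    obtain ⟨mz, hz⟩ := exists_pow_nsmul_eq_zero z
    have hy' : p ^ (my + mz) • y = 0 := by rw [pow_add, mul_nsmul, hy, nsmul_zero]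
    have hz' : p ^ (my + mz) • z = 0 := by rw [pow_add, mul_nsmul', hz, nsmul_zero]
    have hyz : p ^ (my + mz) • (y + z) = 0 := by rw [nsmul_add, hy', hz', add_zero]
    rw [nsmul_eq_nsmul_of_compatible hU (exists_pow_nsmul_eq_zero _).choose_spec hyz,
      nsmul_eq_nsmul_of_compatible hU (exists_pow_nsmul_eq_zero y).choose_spec hy',
      nsmul_eq_nsmul_of_compatible hU (exists_pow_nsmul_eq_zero z).choose_spec hz', nsmul_add]

theorem padicMul_apply {y : Prufer p} {m : ℕ} (hm : p ^ m • y = 0) :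
    padicMul hU y = U m • y :=
  nsmul_eq_nsmul_of_compatible hU (exists_pow_nsmul_eq_zero y).choose_spec hm

theorem padicMul_injective (hcop : ∀ m, (U m).Coprime p) : Function.Injective (padicMul hU) :=
  (injective_iff_map_eq_zero _).2 fun _ hy => eq_zero_of_nsmul_eq_zero (hcop _) hy

end PadicMul

/-- The residue modulo `p ^ m` of the `p`-adic unit `1 + ∑ⱼ b p ^ (n j - N)`, provided `n` grows
fast enough (`gapUnit_compatible`). -/
def gapUnit (p b N : ℕ) (n : ℕ → ℕ) (m : ℕ) : ℕ :=
  1 + ∑ j ∈ Finset.range m, b * p ^ (n j - N)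

variable {b N : ℕ} {n : ℕ → ℕ}

theorem gapUnit_zero : gapUnit p b N n 0 = 1 := by
  simp [gapUnit]

theorem gapUnit_succ (k : ℕ) :
    gapUnit p b N n (k + 1) = gapUnit p b N n k + b * p ^ (n k - N) := by
  simp only [gapUnit, Finset.sum_range_succ, add_assoc]

theorem gapUnit_modEq (hn : Monotone n) {m m' : ℕ} (h : m ≤ m') :
    gapUnit p b N n m' ≡ gapUnit p b N n m [MOD p ^ (n m - N)] := by
  have hdvd : p ^ (n m - N) ∣ ∑ j ∈ Finset.Ico m m', b * p ^ (n j - N) :=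
    Finset.dvd_sum fun j hj =>
      Dvd.dvd.mul_left (pow_dvd_pow p (Nat.sub_le_sub_right (hn (Finset.mem_Ico.1 hj).1) N)) b
  rw [gapUnit, gapUnit, ← Finset.sum_range_add_sum_Ico _ h, ← add_assoc]
  simpa using (Nat.modEq_zero_iff_dvd.2 hdvd).add_left (gapUnit p b N n m)

theorem gapUnit_modEq_one (hn : Monotone n) (m : ℕ) :
    gapUnit p b N n m ≡ 1 [MOD p ^ (n 0 - N)] := by
  simpa [gapUnit_zero] using gapUnit_modEq (b := b) hn (Nat.zero_le m)

theorem gapUnit_coprime (hn : Monotone n) (hN : N < n 0) (m : ℕ) :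
    (gapUnit p b N n m).Coprime p := by
  have h : gapUnit p b N n m ≡ 1 [MOD p] :=
    (gapUnit_modEq_one hn m).of_dvd (dvd_pow_self p (by omega))
  rw [Nat.Coprime, h.gcd_eq, Nat.gcd_one_left]

theorem gapUnit_compatible (hn : StrictMono n) (hN : N ≤ n 0) ⦃m m' : ℕ⦄ (h : m ≤ m') :
    gapUnit p b N n m' ≡ gapUnit p b N n m [MOD p ^ m] := by
  have hm : m + n 0 ≤ n m := by simpa using hn.add_le_nat m 0
  exact (gapUnit_modEq hn.monotone h).of_dvd (pow_dvd_pow p (by omega))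

theorem gapUnit_succ_le (hp : 0 < p) (hb : b < p ^ N) (hN : N ≤ n 0)
    (hgap : ∀ k, n k + N ≤ n (k + 1)) (k : ℕ) : gapUnit p b N n (k + 1) ≤ p ^ n k := by
  induction k with
  | zero =>
    rw [gapUnit_succ, gapUnit_zero]
    exact Nat.add_mul_pow_sub_le (Nat.one_le_pow _ _ hp) hb hN
  | succ k ih =>
    have hk := hgap k
    rw [gapUnit_succ]
    exact Nat.add_mul_pow_sub_le (ih.trans (Nat.pow_le_pow_right hp (by omega))) hb (by omega)

theorem tendsto_gapUnit_div (hp : 1 < p) (hb : b < p ^ N) (hn : StrictMono n) (hN : N ≤ n 0)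
    (hgap : ∀ k, n k + N ≤ n (k + 1)) (hlim : Tendsto (fun k => n (k + 1) - n k) atTop atTop) :
    Tendsto (fun k => (gapUnit p b N n (k + 1) / p ^ n (k + 1) : ℚ)) atTop (𝓝 0) := by
  have hp0 : (0 : ℚ) < p := by exact_mod_cast one_pos.trans hp
  have hratio : Tendsto (fun k => ((p : ℚ)⁻¹) ^ (n (k + 1) - n k)) atTop (𝓝 0) :=
    (tendsto_pow_atTop_nhds_zero_of_lt_one (by positivity)
      (inv_lt_one_of_one_lt₀ (by exact_mod_cast hp))).comp hlim
  refine tendsto_of_tendsto_of_tendsto_of_le_of_le tendsto_const_nhds hratio (fun k => ?_)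
    (fun k => ?_)
  · positivity
  rw [inv_pow, pow_sub₀ _ hp0.ne' (hn.monotone k.le_succ), mul_inv_rev, inv_inv,
    ← div_eq_mul_inv]
  gcongr
  exact_mod_cast gapUnit_succ_le (one_pos.trans hp) hb hN hgap k

theorem padicMul_gapUnit_neg_nsmul_add_eP (hp : p ≠ 0) (hn : StrictMono n) (hn0 : N + N < n 0)
    (hgap : ∀ k, n k + N ≤ n (k + 1))
    (hU : ∀ ⦃m m'⦄, m ≤ m' → gapUnit p b N n m' ≡ gapUnit p b N n m [MOD p ^ m])
    (k : ℕ) :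
    padicMul hU (-(b • eP p N) + eP p (n k)) = gapUnit p b N n k • eP p (n k) := by
  have hk : k + n 0 ≤ n k := by simpa using hn.add_le_nat k 0
  have hx : padicMul hU (b • eP p N) = b • eP p N := by
    have hkill : p ^ N • b • eP p N = 0 := by rw [smul_comm, pow_nsmul_eP_self hp, nsmul_zero]
    have hone : gapUnit p b N n N ≡ 1 [MOD p ^ N] :=
      (gapUnit_modEq_one hn.monotone N).of_dvd (pow_dvd_pow p (by omega))
    rw [padicMul_apply _ hkill, nsmul_eq_nsmul_of_modEq hone hkill, one_nsmul]
  have he : padicMul hU (eP p (n k)) = gapUnit p b N n k • eP p (n k) + b • eP p N := by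
    have hkill := pow_nsmul_eP_self hp (n k)
    have hsucc : gapUnit p b N n (n k) ≡ gapUnit p b N n (k + 1) [MOD p ^ n k] :=
      (gapUnit_modEq hn.monotone (show k + 1 ≤ n k by omega)).of_dvd
        (pow_dvd_pow p (by have := hgap k; omega))
    have hshift := nsmul_eP_add hp N (n k - N)
    rw [Nat.add_sub_cancel' (by omega)] at hshift
    rw [padicMul_apply _ hkill, nsmul_eq_nsmul_of_modEq hsucc hkill, gapUnit_succ, add_nsmul,
      mul_nsmul', hshift]
  rw [map_add, map_neg, hx, he]
  abel

theorem isTSeq_neg_nsmul_add_eP_of_gap_ge (hp : 1 < p) (hb : b < p ^ N) (hn : StrictMono n)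
    (hn0 : N + N < n 0) (hgap : ∀ k, n k + N ≤ n (k + 1))
    (hlim : Tendsto (fun k => n (k + 1) - n k) atTop atTop) :
    IsTSeq fun k => -(b • eP p N) + eP p (n k) := by
  have hU := gapUnit_compatible (p := p) (b := b) hn (by omega : N ≤ n 0)
  have hinj : Function.Injective ((Prufer p).subtype.comp (padicMul hU)) :=
    Subtype.val_injective.comp
      (padicMul_injective hU (gapUnit_coprime hn.monotone (by omega)))
  refine isTSeq_of_injective hinj ((tendsto_add_atTop_iff_nat 1).1 ?_)
  refine ((continuous_quotient_mk'.tendsto 0).comp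
    (tendsto_gapUnit_div hp hb hn (by omega) hgap hlim)).congr fun k => ?_
  rw [Function.comp_apply, Function.comp_apply, AddMonoidHom.comp_apply,
    padicMul_gapUnit_neg_nsmul_add_eP (by omega) hn hn0 hgap]
  exact (coe_nsmul_eP _ _).symm

theorem isTSeq_neg_nsmul_add_eP (hp : 1 < p) (hb : b < p ^ N) (hn : StrictMono n)
    (hlim : Tendsto (fun k => n (k + 1) - n k) atTop atTop) :
    IsTSeq fun k => -(b • eP p N) + eP p (n k) := by
  obtain ⟨K, hK⟩ := eventually_atTop.1
    ((hlim.eventually_ge_atTop N).and (hn.tendsto_atTop.eventually_gt_atTop (N + N)))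
  have hshift (k : ℕ) : n (k + 1 + K) = n (k + K + 1) := by rw [Nat.add_right_comm]
  refine IsTSeq.of_add_nat K (isTSeq_neg_nsmul_add_eP_of_gap_ge (n := fun k => n (k + K)) hp hb
    (fun i j h => hn (by omega)) (by simpa using (hK K le_rfl).2) (fun k => ?_) ?_)
  · have := hn (Nat.lt_add_one (k + K))
    have := (hK (k + K) (by omega)).1
    rw [hshift]
    omega
  · simpa only [hshift, Function.comp_def] using hlim.comp (tendsto_add_atTop_nat K)

end Prufer

theorem stmt7_general (p : ℕ) (hp : p.Prime) (x : Prufer p) (hx : x ≠ 0)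
    (n : ℕ → ℕ) (hmono : StrictMono n)
    (a : ℕ → Prufer p) (ha : ∀ k, a k = -x + eP p (n k)) :
    IsTSeq a ↔ Filter.Tendsto (fun k => (n (k + 1) : ℤ) - (n k : ℤ))
      Filter.atTop Filter.atTop := by
  have hcast (k : ℕ) : (n (k + 1) : ℤ) - n k = ((n (k + 1) - n k : ℕ) : ℤ) :=
    (Nat.cast_sub (hmono k.lt_succ_self).le).symm
  simp_rw [hcast, tendsto_natCast_atTop_iff]
  constructor
  · intro hT
    by_contra hlim
    obtain ⟨g, hg⟩ := Nat.exists_frequently_eq_of_not_tendsto hlim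
    obtain ⟨k, hk⟩ := hg.exists
    have hg0 : 0 < g := hk ▸ Nat.sub_pos_of_lt (hmono k.lt_succ_self)
    refine hx (Prufer.eq_zero_of_isTSeq_of_frequently_gap hp.pos hT ha hg0 (hg.mono fun k hk => ?_))
    have := hmono k.lt_succ_self
    omega
  · intro hlim
    obtain ⟨N, b, hb, rfl⟩ := Prufer.exists_eq_nsmul_eP hp x
    rw [show a = _ from funext ha]
    exact Prufer.isTSeq_neg_nsmul_add_eP hp.one_lt hb hmono hlim

/-- For `x ≠ 0` in `ℤ(p^∞)` and an increasing sequence `{n_k}` of positive integers, the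
sequence `a_k = -x + e_{n_k}` is a T-sequence iff `n_{k+1} - n_k → ∞`. -/
theorem stmt7 (p : ℕ) (hp : p.Prime) (x : Prufer p) (hx : x ≠ 0)
    (n : ℕ → ℕ) (hmono : StrictMono n) (hpos : ∀ k, 0 < n k)
    (a : ℕ → Prufer p) (ha : ∀ k, a k = -x + eP p (n k)) :
    IsTSeq a ↔ Filter.Tendsto (fun k => (n (k + 1) : ℤ) - (n k : ℤ))
      Filter.atTop Filter.atTop :=
  stmt7_general p hp x hx n hmono a ha
end
end

section
/- Let p be an odd prime and l ∈ ℕ. If z = μ₁ e_{n₁} + ⋯ + μ_h e_{n_h} in ℤ(p^∞) with n₁ < ⋯ < n_h and nonzero integers μ_i satisfying Σ|μ_i| ≤ l, then the canonical form of z has at most l nonzero coefficients, i.e., λ(z) ≤ l. -/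
open Filter Topology

noncomputable section

/-! Adding `±e_{n+1}` to an element in canonical form changes at most one digit, unless that digit
is `±(p-1)/2` and overflows; since `p e_{n+1} = e_n`, the overflow is absorbed by replacing the
digit with `∓(p-1)/2` and adding `±e_n` instead, which leaves the support size unchanged
and recurses. Hence the canonical form of `Σ μ_k e_k` has at most `Σ |μ_k|` nonzero digits, and
canonical forms are unique because the top digit `τ_M` of a representation of `0` satisfies
`τ_M e_1 = p^(M-1) • 0 = 0`, so `p ∣ τ_M`. -/

open Finset

variable {p : ℕ}

lemma eP_zero (p : ℕ) : eP p 0 = 0 := by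
  ext
  simp [eP]

lemma coe_eP (p n : ℕ) : (eP p n : AddCircle (1 : ℚ)) = (((p : ℚ) ^ n)⁻¹ : ℚ) := rfl

lemma pow_smul_eP (j n : ℕ) (hp : p ≠ 0) : p ^ j • eP p n = eP p (n - j) := by
  have hpq : (p : ℚ) ≠ 0 := Nat.cast_ne_zero.mpr hp
  ext
  rw [AddSubgroup.coe_nsmul, coe_eP, coe_eP, ← AddCircle.coe_nsmul, nsmul_eq_mul]
  push_cast
  rcases le_total j n with hjn | hnj
  · rw [pow_sub₀ _ hpq hjn, mul_inv, inv_inv, mul_comm]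
  · rw [Nat.sub_eq_zero_of_le hnj, pow_zero, inv_one, AddCircle.coe_period,
      AddCircle.coe_eq_zero_iff]
    refine ⟨(p : ℤ) ^ (j - n), ?_⟩
    rw [zsmul_eq_mul, mul_one, ← div_eq_mul_inv, Int.cast_pow, Int.cast_natCast,
      pow_sub₀ _ hpq hnj, div_eq_mul_inv]

lemma p_smul_eP_succ (n : ℕ) (hp : p ≠ 0) : p • eP p (n + 1) = eP p n := by
  simpa using pow_smul_eP 1 (n + 1) hp

lemma dvd_of_zsmul_eP_one_eq_zero (hp : p ≠ 0) {k : ℤ} (h : k • eP p 1 = 0) : (p : ℤ) ∣ k := by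
  have hpq : (p : ℚ) ≠ 0 := Nat.cast_ne_zero.mpr hp
  have h' := congrArg Subtype.val h
  rw [AddSubgroup.coe_zsmul, coe_eP, pow_one, ← AddCircle.coe_zsmul, ZeroMemClass.coe_zero,
    AddCircle.coe_eq_zero_iff] at h'
  obtain ⟨m, hm⟩ := h'
  refine ⟨m, ?_⟩
  rw [zsmul_eq_mul, zsmul_eq_mul, mul_one, eq_mul_inv_iff_mul_eq₀ hpq] at hm
  exact_mod_cast (hm.symm.trans (mul_comm _ _))

lemma isRep_iff {y : Prufer p} {σ : ℕ →₀ ℤ} :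
    IsRep p y σ ↔ σ 0 = 0 ∧ y = Finsupp.linearCombination ℤ (eP p) σ := by
  rw [IsRep, Finsupp.linearCombination_apply, Finsupp.sum]

lemma isCanonical_zero (p : ℕ) : IsCanonical p 0 0 := by
  simp [IsCanonical, IsRep]

lemma eq_zero_of_linearCombination_eP_eq_zero (hp : 0 < p) {τ : ℕ →₀ ℤ} (h0 : τ 0 = 0)
    (hτ : ∀ n, (τ n).natAbs < p) (h : Finsupp.linearCombination ℤ (eP p) τ = 0) : τ = 0 := by
  by_contra hne
  have hsupp : τ.support.Nonempty := Finsupp.support_nonempty_iff.mpr hne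
  set M := τ.support.max' hsupp
  have hM : M ∈ τ.support := τ.support.max'_mem hsupp
  have hM0 : M ≠ 0 := by
    rintro hM0
    exact Finsupp.mem_support_iff.mp hM (hM0 ▸ h0)
  have htop : p ^ (M - 1) • Finsupp.linearCombination ℤ (eP p) τ = τ M • eP p 1 := by
    rw [Finsupp.linearCombination_apply, Finsupp.sum, smul_sum]
    simp_rw [smul_comm (p ^ (M - 1)), pow_smul_eP _ _ hp.ne']
    refine (sum_eq_single M (fun n hn hnM => ?_) (absurd hM)).trans ?_
    · have hnM : n < M := lt_of_le_of_ne (τ.support.le_max' n hn) hnM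
      rw [show n - (M - 1) = 0 by omega, eP_zero, smul_zero]
    · rw [show M - (M - 1) = 1 by omega]
  rw [h, smul_zero] at htop
  have hdvd := dvd_of_zsmul_eP_one_eq_zero hp.ne' htop.symm
  exact Finsupp.mem_support_iff.mp hM
    (Int.eq_zero_of_dvd_of_natAbs_lt_natAbs hdvd (by simpa using hτ M))

lemma IsCanonical.unique (hp : 0 < p) {y : Prufer p} {σ σ' : ℕ →₀ ℤ}
    (h : IsCanonical p y σ) (h' : IsCanonical p y σ') : σ = σ' := by
  obtain ⟨hrep, hbd⟩ := h
  obtain ⟨hrep', hbd'⟩ := h'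
  rw [isRep_iff] at hrep hrep'
  rw [← sub_eq_zero]
  refine eq_zero_of_linearCombination_eP_eq_zero hp (by simp [hrep.1, hrep'.1])
    (fun n => ?_) (by rw [map_sub, ← hrep.2, ← hrep'.2, sub_self])
  have := hbd n
  have := hbd' n
  have := Int.natAbs_sub_le (σ n) (σ' n)
  rw [Finsupp.sub_apply]
  omega

lemma IsRep.add_single {y : Prufer p} {σ : ℕ →₀ ℤ} (h : IsRep p y σ) {n : ℕ} (hn : n ≠ 0)
    (c : ℤ) : IsRep p (y + c • eP p n) (σ + Finsupp.single n c) := by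
  rw [isRep_iff] at h ⊢
  simp [h.1, h.2, hn.symm]

lemma IsCanonical.add_single {y : Prufer p} {σ : ℕ →₀ ℤ} (h : IsCanonical p y σ) {n : ℕ}
    (hn : n ≠ 0) {c : ℤ} (hc : 2 * (σ n + c).natAbs ≤ p - 1) :
    IsCanonical p (y + c • eP p n) (σ + Finsupp.single n c) := by
  refine ⟨h.1.add_single hn c, fun m => ?_⟩
  rcases eq_or_ne m n with rfl | hmn
  · simpa using hc
  · simpa [Finsupp.single_eq_of_ne hmn] using h.2 m

lemma support_add_single_subset (σ : ℕ →₀ ℤ) (n : ℕ) (c : ℤ) :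
    (σ + Finsupp.single n c).support ⊆ insert n σ.support := by
  refine Finsupp.support_add.trans ?_
  rw [union_comm, insert_eq]
  exact union_subset_union_left Finsupp.support_single_subset

lemma IsCanonical.exists_add_unit_smul_eP (hodd : Odd p) (hp : 1 < p) {ε : ℤ}
    (hε : ε.natAbs = 1) (n : ℕ) {y : Prufer p} {σ : ℕ →₀ ℤ} (h : IsCanonical p y σ) :
    ∃ σ', IsCanonical p (y + ε • eP p n) σ' ∧ #σ'.support ≤ #σ.support + 1 := by
  have hp3 : 3 ≤ p := by obtain ⟨k, rfl⟩ := hodd; omega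
  have hpodd : p % 2 = 1 := Nat.odd_iff.mp hodd
  induction n generalizing y σ with
  | zero => exact ⟨σ, by simpa [eP_zero] using h, by omega⟩
  | succ n ih =>
    by_cases hfit : 2 * (σ (n + 1) + ε).natAbs ≤ p - 1
    · refine ⟨_, h.add_single n.add_one_ne_zero hfit, ?_⟩
      exact (card_le_card (support_add_single_subset σ _ ε)).trans (card_insert_le _ _)
    · -- `σ (n+1) = ε (p-1)/2` overflows; `ε e_{n+1} = (ε - ε p) e_{n+1} + ε e_n` carries it.
      have hbd := h.2 (n + 1)
      have hε' : ε = 1 ∨ ε = -1 := by omega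
      have hcarry : 2 * (σ (n + 1) + (ε - ε * p)).natAbs ≤ p - 1 := by
        rcases hε' with rfl | rfl <;> omega
      have hmem : n + 1 ∈ σ.support := by
        rw [Finsupp.mem_support_iff]
        rcases hε' with rfl | rfl <;> omega
      obtain ⟨σ', h', hcard⟩ := ih (h.add_single n.add_one_ne_zero hcarry)
      refine ⟨σ', ?_, ?_⟩
      · convert h' using 1
        rw [← p_smul_eP_succ n (by omega), ← natCast_zsmul, smul_smul, add_assoc, ← add_smul,
          sub_add_cancel]
      · have hsub := support_add_single_subset σ (n + 1) (ε - ε * p)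
        rw [insert_eq_of_mem hmem] at hsub
        exact hcard.trans (by have := card_le_card hsub; omega)

lemma IsCanonical.exists_add_zsmul_eP (hodd : Odd p) (hp : 1 < p) (μ : ℤ) (n : ℕ)
    {y : Prufer p} {σ : ℕ →₀ ℤ} (h : IsCanonical p y σ) :
    ∃ σ', IsCanonical p (y + μ • eP p n) σ' ∧ #σ'.support ≤ #σ.support + μ.natAbs := by
  induction μ using Int.induction_on with
  | zero => exact ⟨σ, by simpa using h, by omega⟩
  | succ i ih =>
    obtain ⟨σ₁, h₁, hcard₁⟩ := ih
    obtain ⟨σ₂, h₂, hcard₂⟩ := h₁.exists_add_unit_smul_eP hodd hp (ε := 1) rfl n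
    refine ⟨σ₂, by rwa [add_smul, ← add_assoc], by omega⟩
  | pred i ih =>
    obtain ⟨σ₁, h₁, hcard₁⟩ := ih
    obtain ⟨σ₂, h₂, hcard₂⟩ := h₁.exists_add_unit_smul_eP hodd hp (ε := -1) rfl n
    refine ⟨σ₂, by rwa [sub_eq_add_neg, add_smul, ← add_assoc], by omega⟩

lemma exists_isCanonical_sum_zsmul_eP (hodd : Odd p) (hp : 1 < p) (s : Finset ℕ) (μ : ℕ → ℤ) :
    ∃ σ, IsCanonical p (∑ k ∈ s, μ k • eP p k) σ ∧ #σ.support ≤ ∑ k ∈ s, (μ k).natAbs := by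
  induction s using Finset.induction_on with
  | empty => exact ⟨0, by simpa using isCanonical_zero p, by simp⟩
  | insert k s hk ih =>
    obtain ⟨σ, h, hcard⟩ := ih
    obtain ⟨σ', h', hcard'⟩ := h.exists_add_zsmul_eP hodd hp (μ k) k
    refine ⟨σ', by rwa [sum_insert hk, add_comm], ?_⟩
    rw [sum_insert hk]
    omega

theorem stmt10_general (p : ℕ) (hp : p.Prime) (hodd : p ≠ 2) (l : ℕ)
    (s : Finset ℕ) (μ : ℕ → ℤ)
    (hsum : (∑ k ∈ s, (μ k).natAbs) ≤ l)
    (z : Prufer p) (hz : z = ∑ k ∈ s, μ k • eP p k)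
    (σ : ℕ →₀ ℤ) (hσ : IsCanonical p z σ) :
    σ.support.card ≤ l := by
  obtain ⟨σ', hσ', hcard⟩ :=
    exists_isCanonical_sum_zsmul_eP (hp.odd_of_ne_two hodd) hp.one_lt s μ
  rw [hσ.unique hp.pos (hz ▸ hσ')]
  exact hcard.trans hsum

/-- If `z = μ₁ e_{n₁} + ⋯ + μ_h e_{n_h}` with nonzero `μᵢ` and `Σ|μᵢ| ≤ l`, then the canonical
form of `z` has at most `l` nonzero coefficients: `λ(z) ≤ l`. -/
theorem stmt10 (p : ℕ) (hp : p.Prime) (hodd : p ≠ 2) (l : ℕ)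
    (s : Finset ℕ) (μ : ℕ → ℤ) (hs : ∀ k ∈ s, 1 ≤ k) (hμ : ∀ k ∈ s, μ k ≠ 0)
    (hsum : (∑ k ∈ s, (μ k).natAbs) ≤ l)
    (z : Prufer p) (hz : z = ∑ k ∈ s, μ k • eP p k)
    (σ : ℕ →₀ ℤ) (hσ : IsCanonical p z σ) :
    σ.support.card ≤ l :=
  stmt10_general p hp hodd l s μ hsum z hz σ hσ
end
end
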